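/- Let G be a graph with two indistinguishable vertices a and b. Then there exists a minimum fill-in ordering of G in which a and b are eliminated consecutively. -/

import Mathlib

open SimpleGraph

attribute [local instance] Classical.propDecidable

variable {V : Type*} [Fintype V] [DecidableEq V]

/-- The elimination graph `G_x`: delete `x` and complete its neighborhood to a clique.
(The eliminated vertex is kept as an isolated vertex.) -/
def elimG (G : SimpleGraph V) (x : V) : SimpleGraph V where
  Adj u v := u ≠ v ∧ u ≠ x ∧ v ≠ x ∧ (G.Adj u v ∨ (G.Adj x u ∧ G.Adj x v))
  symm := by
    constructor
    intro u v h
    obtain ⟨h1, h2, h3, h4⟩ := h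
    refine ⟨h1.symm, h3, h2, ?_⟩
    rcases h4 with h | ⟨h4, h5⟩
    · exact Or.inl h.symm
    · exact Or.inr ⟨h5, h4⟩
  loopless := by constructor; intro v h; exact h.1 rfl

/-- The deficiency `D(x)`: the set of unordered pairs of distinct, non-adjacent
neighbors of `x`. -/
noncomputable def deficiencyFinset (G : SimpleGraph V) (x : V) : Finset (Sym2 V) :=
  ((Finset.univ ×ˢ Finset.univ : Finset (V × V)).filter
    (fun p => p.1 ≠ p.2 ∧ G.Adj x p.1 ∧ G.Adj x p.2 ∧ ¬ G.Adj p.1 p.2)).image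
    (fun p => s(p.1, p.2))

/-- Successive elimination of a list of vertices. -/
def elimList : SimpleGraph V → List V → SimpleGraph V
  | G, [] => G
  | G, x :: xs => elimList (elimG G x) xs

/-- The fill-in of an elimination ordering given as a list: the total number of
edges added during the elimination process. -/
noncomputable def fillList : SimpleGraph V → List V → ℕ
  | _, [] => 0
  | G, x :: xs => (deficiencyFinset G x).card + fillList (elimG G x) xs

/-- The set of fill edges added during the elimination process. -/
noncomputable def fillEdges : SimpleGraph V → List V → Finset (Sym2 V)
  | _, [] => ∅
  | G, x :: xs => deficiencyFinset G x ∪ fillEdges (elimG G x) xs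

/-- A list is an (elimination) ordering if it enumerates every vertex exactly once. -/
def IsOrdering (L : List V) : Prop := L.Nodup ∧ ∀ v : V, v ∈ L

/-- The minimum fill-in `Φ(G)`. -/
noncomputable def minFillIn (G : SimpleGraph V) : ℕ :=
  sInf {n | ∃ L : List V, IsOrdering L ∧ fillList G L = n}

/-- A vertex is simplicial if its neighborhood is a clique. -/
def IsSimplicial (G : SimpleGraph V) (x : V) : Prop :=
  ∀ a b, G.Adj x a → G.Adj x b → a ≠ b → G.Adj a b

/-- `a` and `b` are indistinguishable: equal closed neighborhoods. -/
def Indistinguishable (G : SimpleGraph V) (a b : V) : Prop :=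
  a ≠ b ∧ insert a (G.neighborSet a) = insert b (G.neighborSet b)

/-- `a` and `b` are twins: equal open neighborhoods (hence non-adjacent). -/
def Twins (G : SimpleGraph V) (a b : V) : Prop :=
  a ≠ b ∧ G.neighborSet a = G.neighborSet b

/-- Chordality: no induced cycle of length at least 4, equivalently every cycle of
length at least 4 has a chord. -/
def IsChordal (G : SimpleGraph V) : Prop :=
  ∀ n : ℕ, 4 ≤ n → ∀ f : ZMod n → V, Function.Injective f →
    ¬ (∀ i j : ZMod n, G.Adj (f i) (f j) ↔ (j = i + 1 ∨ i = j + 1))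

/-- `T` is a triangulation of `G`: a set of non-edges whose addition makes `G` chordal. -/
def IsTriangulation (G : SimpleGraph V) (T : Finset (Sym2 V)) : Prop :=
  (∀ e ∈ T, ¬ e.IsDiag ∧ e ∉ G.edgeSet) ∧
    IsChordal (G ⊔ SimpleGraph.fromEdgeSet (↑T : Set (Sym2 V)))

/-- A minimum triangulation. -/
def IsMinTriangulation (G : SimpleGraph V) (T : Finset (Sym2 V)) : Prop :=
  IsTriangulation G T ∧ ∀ T' : Finset (Sym2 V), IsTriangulation G T' → T.card ≤ T'.card

/-- The graph obtained from `G` by deleting the vertices in `S`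
(deleted vertices are kept as isolated vertices). -/
def deleteSet (G : SimpleGraph V) (S : Set V) : SimpleGraph V where
  Adj u v := G.Adj u v ∧ u ∉ S ∧ v ∉ S
  symm := ⟨fun _ _ ⟨h, hu, hv⟩ => ⟨h.symm, hv, hu⟩⟩
  loopless := ⟨fun _ h => G.irrefl h.1⟩

/-!
Eliminating a simplicial vertex adds no fill edges, and eliminating it earlier than planned
never increases the fill-in of the remaining vertices, since it only deletes that vertex.
If `N[a] = N[b]`, then `b` is simplicial as soon as `a` has been eliminated (and vice versa).
So in an optimal ordering the later of `a`, `b` can be moved right behind the earlier one, and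
the two can be swapped, because their deficiencies coincide and eliminating both in either
order yields the same graph.
-/

section

omit [Fintype V] [DecidableEq V]

lemma elimG_adj (G : SimpleGraph V) (x u v : V) :
    (elimG G x).Adj u v ↔ u ≠ v ∧ u ≠ x ∧ v ≠ x ∧ (G.Adj u v ∨ (G.Adj x u ∧ G.Adj x v)) :=
  Iff.rfl

namespace IsSimplicial

variable {G : SimpleGraph V} {v : V}

lemma elimG_adj (hs : IsSimplicial G v) (u w : V) :
    (elimG G v).Adj u w ↔ u ≠ w ∧ u ≠ v ∧ w ≠ v ∧ G.Adj u w := by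
  rw [_root_.elimG_adj]
  constructor
  · rintro ⟨huw, huv, hwv, h | ⟨hu, hw⟩⟩
    exacts [⟨huw, huv, hwv, h⟩, ⟨huw, huv, hwv, hs u w hu hw huw⟩]
  · rintro ⟨huw, huv, hwv, h⟩
    exact ⟨huw, huv, hwv, Or.inl h⟩

lemma elimG (hs : IsSimplicial G v) (x : V) : IsSimplicial (elimG G x) v := by
  intro u w hu hw huw
  obtain ⟨-, -, hux, hu⟩ := hu
  obtain ⟨-, -, hwx, hw⟩ := hw
  refine ⟨huw, hux, hwx, ?_⟩
  rcases hu with hu | ⟨hxv', hxu⟩ <;> rcases hw with hw | ⟨hxv', hxw⟩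
  · exact Or.inl (hs u w hu hw huw)
  · exact Or.inr ⟨(hs u x hu hxv'.symm hux).symm, hxw⟩
  · exact Or.inr ⟨hxu, (hs w x hw hxv'.symm hwx).symm⟩
  · exact Or.inr ⟨hxu, hxw⟩

lemma elimG_comm (hs : IsSimplicial G v) {x : V} (hxv : x ≠ v) :
    _root_.elimG (_root_.elimG G v) x = _root_.elimG (_root_.elimG G x) v := by
  ext u w
  rw [_root_.elimG_adj, (hs.elimG x).elimG_adj, hs.elimG_adj, hs.elimG_adj, hs.elimG_adj,
    _root_.elimG_adj]
  grind

end IsSimplicial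

namespace Indistinguishable

variable {G : SimpleGraph V} {a b : V}

lemma symm (h : Indistinguishable G a b) : Indistinguishable G b a := ⟨h.1.symm, h.2.symm⟩

lemma adj (h : Indistinguishable G a b) : G.Adj a b := by
  have ha : a ∈ insert b (G.neighborSet b) := h.2 ▸ Set.mem_insert a _
  exact ((Set.mem_insert_iff.mp ha).resolve_left h.1).symm

lemma adj_iff_adj (h : Indistinguishable G a b) {u : V} (hua : u ≠ a) (hub : u ≠ b) :
    G.Adj a u ↔ G.Adj b u := by
  simpa [hua, hub] using congrArg (u ∈ ·) h.2

lemma elimG (h : Indistinguishable G a b) {x : V} (hxa : x ≠ a) (hxb : x ≠ b) :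
    Indistinguishable (elimG G x) a b := by
  refine ⟨h.1, Set.ext fun u => ?_⟩
  have hx : G.Adj x a ↔ G.Adj x b := by
    rw [G.adj_comm x a, G.adj_comm x b]
    exact h.adj_iff_adj hxa hxb
  by_cases hua : u = a
  · subst hua
    simpa using Or.inr ⟨h.1.symm, hxb.symm, hxa.symm, Or.inl h.adj.symm⟩
  by_cases hub : u = b
  · subst hub
    simpa using Or.inr ⟨h.1, hxa.symm, hxb.symm, Or.inl h.adj⟩
  simp only [Set.mem_insert_iff, mem_neighborSet, _root_.elimG_adj, hua, hub, false_or,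
    h.adj_iff_adj hua hub, hx]
  grind

lemma isSimplicial_elimG (h : Indistinguishable G a b) : IsSimplicial (_root_.elimG G a) b := by
  intro u w hu hw huw
  obtain ⟨hbu, -, hua, hu⟩ := hu
  obtain ⟨hbw, -, hwa, hw⟩ := hw
  have hau : G.Adj a u := hu.elim (h.adj_iff_adj hua hbu.symm).mpr And.right
  have haw : G.Adj a w := hw.elim (h.adj_iff_adj hwa hbw.symm).mpr And.right
  exact ⟨huw, hua, hwa, Or.inr ⟨hau, haw⟩⟩

lemma elimG_elimG_adj (h : Indistinguishable G a b) (u w : V) :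
    (_root_.elimG (_root_.elimG G a) b).Adj u w ↔
      u ≠ w ∧ u ≠ a ∧ u ≠ b ∧ w ≠ a ∧ w ≠ b ∧ (G.Adj u w ∨ (G.Adj a u ∧ G.Adj a w)) := by
  rw [h.isSimplicial_elimG.elimG_adj, _root_.elimG_adj]
  tauto

lemma elimG_elimG_comm (h : Indistinguishable G a b) :
    _root_.elimG (_root_.elimG G a) b = _root_.elimG (_root_.elimG G b) a := by
  ext u w
  rw [h.elimG_elimG_adj, h.symm.elimG_elimG_adj]
  constructor
  · rintro ⟨huw, hua, hub, hwa, hwb, h'⟩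
    refine ⟨huw, hub, hua, hwb, hwa, ?_⟩
    rwa [← h.adj_iff_adj hua hub, ← h.adj_iff_adj hwa hwb]
  · rintro ⟨huw, hub, hua, hwb, hwa, h'⟩
    refine ⟨huw, hua, hub, hwa, hwb, ?_⟩
    rwa [h.adj_iff_adj hua hub, h.adj_iff_adj hwa hwb]

end Indistinguishable

end

lemma mem_deficiencyFinset (G : SimpleGraph V) (x : V) (e : Sym2 V) :
    e ∈ deficiencyFinset G x ↔
      ∃ u w : V, e = s(u, w) ∧ u ≠ w ∧ G.Adj x u ∧ G.Adj x w ∧ ¬ G.Adj u w := by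
  simp only [deficiencyFinset, Finset.mem_image, Finset.mem_filter, Finset.mem_product,
    Finset.mem_univ, true_and, Prod.exists]
  grind

namespace IsSimplicial

variable {G : SimpleGraph V} {v : V}

lemma deficiencyFinset_eq_empty (hs : IsSimplicial G v) : deficiencyFinset G v = ∅ := by
  refine Finset.eq_empty_iff_forall_notMem.mpr fun e he => ?_
  obtain ⟨u, w, -, huw, hu, hw, hnadj⟩ := (mem_deficiencyFinset G v e).mp he
  exact hnadj (hs u w hu hw huw)

lemma deficiencyFinset_elimG_subset (hs : IsSimplicial G v) (x : V) :
    deficiencyFinset (_root_.elimG G v) x ⊆ deficiencyFinset G x := by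
  intro e he
  rw [mem_deficiencyFinset] at he ⊢
  obtain ⟨u, w, rfl, huw, hu, hw, hnadj⟩ := he
  rw [hs.elimG_adj] at hu hw hnadj
  exact ⟨u, w, rfl, huw, hu.2.2.2, hw.2.2.2, fun h => hnadj ⟨huw, hu.2.2.1, hw.2.2.1, h⟩⟩

lemma fillList_elimG_erase_le (hs : IsSimplicial G v) {L : List V} (hv : v ∈ L) :
    fillList (_root_.elimG G v) (L.erase v) ≤ fillList G L := by
  induction L generalizing G with
  | nil => simp at hv
  | cons x xs ih =>
    by_cases hxv : x = v
    · subst hxv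
      simp [fillList, hs.deficiencyFinset_eq_empty]
    · have hvxs : v ∈ xs := (List.mem_cons.mp hv).resolve_left (Ne.symm hxv)
      rw [List.erase_cons_tail (by simpa using hxv), fillList, fillList, hs.elimG_comm hxv]
      exact Nat.add_le_add (Finset.card_le_card (hs.deficiencyFinset_elimG_subset x))
        (ih (hs.elimG x) hvxs)

end IsSimplicial

namespace Indistinguishable

variable {G : SimpleGraph V} {a b : V}

lemma deficiencyFinset_subset (h : Indistinguishable G a b) :
    deficiencyFinset G a ⊆ deficiencyFinset G b := by
  intro e he
  rw [mem_deficiencyFinset] at he ⊢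
  obtain ⟨u, w, rfl, huw, hu, hw, hnadj⟩ := he
  have hub : u ≠ b := by
    rintro rfl
    exact hnadj ((h.adj_iff_adj hw.ne' huw.symm).mp hw)
  have hwb : w ≠ b := by
    rintro rfl
    exact hnadj ((h.adj_iff_adj hu.ne' huw).mp hu).symm
  exact ⟨u, w, rfl, huw, (h.adj_iff_adj hu.ne' hub).mp hu, (h.adj_iff_adj hw.ne' hwb).mp hw,
    hnadj⟩

lemma fillList_cons_cons_swap (h : Indistinguishable G a b) (L : List V) :
    fillList G (a :: b :: L) = fillList G (b :: a :: L) := by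
  simp only [fillList,
    Finset.Subset.antisymm h.deficiencyFinset_subset h.symm.deficiencyFinset_subset,
    h.isSimplicial_elimG.deficiencyFinset_eq_empty,
    h.symm.isSimplicial_elimG.deficiencyFinset_eq_empty, h.elimG_elimG_comm]

lemma fillList_cons_cons_erase_le (h : Indistinguishable G a b) {L : List V} (hb : b ∈ L) :
    fillList G (a :: b :: L.erase b) ≤ fillList G (a :: L) := by
  simp only [fillList, h.isSimplicial_elimG.deficiencyFinset_eq_empty, Finset.card_empty,
    zero_add]
  exact Nat.add_le_add_left (h.isSimplicial_elimG.fillList_elimG_erase_le hb) _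

lemma exists_consecutive_fillList_le (h : Indistinguishable G a b) {L : List V}
    (ha : a ∈ L) (hb : b ∈ L) :
    ∃ L1 L2 : List V, (L1 ++ a :: b :: L2).Perm L ∧
      fillList G (L1 ++ a :: b :: L2) ≤ fillList G L := by
  induction L generalizing G with
  | nil => simp at ha
  | cons x xs ih =>
    by_cases hxa : x = a
    · subst hxa
      have hbxs : b ∈ xs := (List.mem_cons.mp hb).resolve_left h.1.symm
      exact ⟨[], xs.erase b, ((List.perm_cons_erase hbxs).symm).cons x,
        h.fillList_cons_cons_erase_le hbxs⟩
    have haxs : a ∈ xs := (List.mem_cons.mp ha).resolve_left (Ne.symm hxa)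
    by_cases hxb : x = b
    · subst hxb
      refine ⟨[], xs.erase a,
        (List.Perm.swap x a _).trans ((List.perm_cons_erase haxs).symm.cons x), ?_⟩
      rw [List.nil_append, h.fillList_cons_cons_swap]
      exact h.symm.fillList_cons_cons_erase_le haxs
    have hbxs : b ∈ xs := (List.mem_cons.mp hb).resolve_left (Ne.symm hxb)
    obtain ⟨L1, L2, hperm, hle⟩ := ih (h.elimG hxa hxb) haxs hbxs
    exact ⟨x :: L1, L2, hperm.cons x, Nat.add_le_add_left hle _⟩

end Indistinguishable

lemma exists_isOrdering_fillList_eq_minFillIn (G : SimpleGraph V) :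
    ∃ L : List V, IsOrdering L ∧ fillList G L = minFillIn G := by
  have hne : {n | ∃ L : List V, IsOrdering L ∧ fillList G L = n}.Nonempty :=
    ⟨_, Finset.univ.toList, ⟨Finset.nodup_toList _, fun v => Finset.mem_toList.mpr
      (Finset.mem_univ v)⟩, rfl⟩
  exact Nat.sInf_mem hne

/-- if `a` and `b` are indistinguishable, there is a minimum fill-in
ordering in which `a` and `b` are eliminated consecutively. -/
theorem stmt_7 (G : SimpleGraph V) (a b : V) (h : Indistinguishable G a b) :
    ∃ L1 L2 : List V, IsOrdering (L1 ++ a :: b :: L2) ∧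
      fillList G (L1 ++ a :: b :: L2) = minFillIn G := by
  obtain ⟨L, hord, hfill⟩ := exists_isOrdering_fillList_eq_minFillIn G
  obtain ⟨L1, L2, hperm, hle⟩ := h.exists_consecutive_fillList_le (hord.2 a) (hord.2 b)
  have hord' : IsOrdering (L1 ++ a :: b :: L2) :=
    ⟨hperm.nodup_iff.mpr hord.1, fun v => hperm.mem_iff.mpr (hord.2 v)⟩
  exact ⟨L1, L2, hord', le_antisymm (hle.trans hfill.le) (Nat.sInf_le ⟨_, hord', rfl⟩)⟩
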